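/- Let k ≥ 2 and l ≥ 1 be integers, let D be a k×l matrix of nonnegative integers, and let C and M be as defined from D. Fix integers m ≥ 1, t ∈ {1,...,l}, and 0 ≤ s ≤ 2^m, and consider the partial block of B_{m+1} consisting of its first 2^m copies of D_1, ..., 2^m copies of D_{t−1}, followed by its first s copies of D_t. Then the number of edges (i,j) of C with position i lying in B_1 B_2 ⋯ B_m and position j lying in this partial block equals (2^m − 1) · 2^m · Σ_{i=1}^{l} Σ_{j=1}^{t−1} m_{i,j} + (2^m − 1) · s · Σ_{i=1}^{l} m_{i,t}, where the sum over j from 1 to t−1 is 0 when t = 1. -/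

import Mathlib

open Filter

/-- The atom `D_j`: `d_{1,j}` copies of `1`, then `d_{2,j}` copies of `2`, …,
then `d_{k,j}` copies of `k`. -/
def atomList {k l : ℕ} (D : Fin k → Fin l → ℕ) (j : Fin l) : List ℕ :=
  (List.finRange k).flatMap fun i => List.replicate (D i j) ((i : ℕ) + 1)

/-- The block `B_m` (for `m ≥ 1`): `2^(m-1)` copies of `D_1`, then `2^(m-1)` copies
of `D_2`, …, then `2^(m-1)` copies of `D_l`, concatenated. -/
def blockList {k l : ℕ} (D : Fin k → Fin l → ℕ) (m : ℕ) : List ℕ :=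
  (List.finRange l).flatMap fun j => (List.replicate (2 ^ (m - 1)) (atomList D j)).flatten

/-- The concatenation `B_1 B_2 ⋯ B_m`. -/
def prefixList {k l : ℕ} (D : Fin k → Fin l → ℕ) (m : ℕ) : List ℕ :=
  (List.range m).flatMap fun x => blockList D (x + 1)

/-- The term `c_r` (1-indexed) of the infinite sequence `C = B_1 B_2 B_3 ⋯`. -/
def seqC {k l : ℕ} (D : Fin k → Fin l → ℕ) (r : ℕ) : ℕ :=
  (prefixList D r).getD (r - 1) 0

/-- The `(i,j)` entry `m_{i,j}` of the matrix `M`: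
`m_{i,j} = Σ_{x=1}^{k-1} d_{x,i} (Σ_{y=x+1}^{k} d_{y,j})`. -/
def Ment {k l : ℕ} (D : Fin k → Fin l → ℕ) (i j : Fin l) : ℕ :=
  ∑ x : Fin k, D x i * ∑ y ∈ Finset.Ioi x, D y j

/-- The number of edges `(i, j)` of `C` (pairs `i < j` with `c_i < c_j`) such that
`a < i ≤ b` and `c < j ≤ d` (positions are 1-indexed). -/
noncomputable def edgesBetween {k l : ℕ} (D : Fin k → Fin l → ℕ) (a b c d : ℕ) : ℕ :=
  {p : ℕ × ℕ | p.1 < p.2 ∧ a < p.1 ∧ p.1 ≤ b ∧ c < p.2 ∧ p.2 ≤ d ∧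
    seqC D p.1 < seqC D p.2}.ncard

/-- The length of the partial block of `B_{m+1}` consisting of its first `2^m` copies of
each of `D_1, …, D_{t-1}` followed by its first `s` copies of `D_t`. -/
def partialLen {k l : ℕ} (D : Fin k → Fin l → ℕ) (m : ℕ) (t : Fin l) (s : ℕ) : ℕ :=
  2 ^ m * (∑ j ∈ Finset.Iio t, (atomList D j).length) + s * (atomList D t).length

/-!
Counting increasing pairs `(a, b)` with `a` in a list `A` and `b` in a list `B` is additive
in `A` and in `B` under concatenation, and a copy of `D_i` against a copy of `D_j` contributes
`m_{i,j}`. Now `B_1 ⋯ B_m` consists of `2^0 + ⋯ + 2^(m-1) = 2^m - 1` copies of each atom, while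
the partial block consists of `2^m` copies of `D_j` for `j < t` and `s` copies of `D_t`, which
gives the formula by bilinearity. It remains to identify the positions of `C` with the entries
of these lists: `B_1 ⋯ B_n` is a prefix of `B_1 ⋯ B_{n+1}`, and the partial block (as
`s ≤ 2^m`) is a prefix of `B_{m+1}`.
-/

namespace EdgeCount

open Finset

def crossCount (A B : List ℕ) : ℕ := (A.map fun a => B.countP (a < ·)).sum

@[simp] lemma crossCount_nil_left (B : List ℕ) : crossCount [] B = 0 := rfl

@[simp] lemma crossCount_nil_right (A : List ℕ) : crossCount A [] = 0 := by
  simp [crossCount]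

lemma crossCount_cons_left (a : ℕ) (A B : List ℕ) :
    crossCount (a :: A) B = B.countP (a < ·) + crossCount A B := rfl

lemma crossCount_append_left (A₁ A₂ B : List ℕ) :
    crossCount (A₁ ++ A₂) B = crossCount A₁ B + crossCount A₂ B := by
  simp [crossCount]

lemma crossCount_append_right (A B₁ B₂ : List ℕ) :
    crossCount A (B₁ ++ B₂) = crossCount A B₁ + crossCount A B₂ := by
  simp [crossCount, List.countP_append, List.sum_map_add]

lemma crossCount_flatten_left (L : List (List ℕ)) (B : List ℕ) :
    crossCount L.flatten B = (L.map (crossCount · B)).sum := by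
  induction L with
  | nil => rfl
  | cons A L ih => simp [crossCount_append_left, ih]

lemma crossCount_flatten_right (A : List ℕ) (L : List (List ℕ)) :
    crossCount A L.flatten = (L.map (crossCount A)).sum := by
  induction L with
  | nil => simp
  | cons B L ih => simp [crossCount_append_right, ih]

lemma crossCount_flatMap_left {α : Type*} (L : List α) (f : α → List ℕ) (B : List ℕ) :
    crossCount (L.flatMap f) B = (L.map fun x => crossCount (f x) B).sum := by
  simp [List.flatMap_def, crossCount_flatten_left, Function.comp_def]

lemma crossCount_flatMap_right {α : Type*} (A : List ℕ) (L : List α) (f : α → List ℕ) :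
    crossCount A (L.flatMap f) = (L.map fun x => crossCount A (f x)).sum := by
  simp [List.flatMap_def, crossCount_flatten_right, Function.comp_def]

lemma crossCount_flatten_replicate_left (n : ℕ) (A B : List ℕ) :
    crossCount (List.replicate n A).flatten B = n * crossCount A B := by
  simp [crossCount_flatten_left, List.map_replicate]

lemma crossCount_flatten_replicate_right (n : ℕ) (A B : List ℕ) :
    crossCount A (List.replicate n B).flatten = n * crossCount A B := by
  simp [crossCount_flatten_right, List.map_replicate]

lemma crossCount_replicate_left (n a : ℕ) (B : List ℕ) :
    crossCount (List.replicate n a) B = n * B.countP (a < ·) := by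
  simp [crossCount, List.map_replicate]

lemma countP_eq_sum_range (B : List ℕ) (p : ℕ → Bool) :
    B.countP p = ∑ b ∈ Finset.range B.length, if p (B.getD b 0) then 1 else 0 := by
  induction B with
  | nil => rfl
  | cons b B ih =>
    rw [List.countP_cons, List.length_cons, Finset.sum_range_succ', ih]
    simp

lemma crossCount_eq_card (A B : List ℕ) :
    crossCount A B = #{p ∈ Finset.range A.length ×ˢ Finset.range B.length |
      A.getD p.1 0 < B.getD p.2 0} := by
  rw [Finset.card_filter, Finset.sum_product]
  induction A with
  | nil => rfl
  | cons a A ih =>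
    rw [crossCount_cons_left, ih, countP_eq_sum_range, List.length_cons, Finset.sum_range_succ']
    simp [add_comm]

lemma flatMap_prefix_flatMap {α β : Type*} [LinearOrder α] {L : List α}
    (hL : L.Pairwise (· < ·)) {f g : α → List β} (t : α) (hlt : ∀ j < t, f j = g j)
    (hpre : ∀ j, f j <+: g j) (hgt : ∀ j, t < j → f j = []) :
    L.flatMap f <+: L.flatMap g := by
  induction L with
  | nil => exact List.prefix_refl []
  | cons a L ih =>
    rw [List.pairwise_cons] at hL
    rw [List.flatMap_cons, List.flatMap_cons]
    by_cases ha : a < t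
    · rw [hlt a ha]
      exact List.prefix_append_right_inj _ |>.mpr (ih hL.2)
    · have hrest : L.flatMap f = [] :=
        List.flatMap_eq_nil_iff.mpr fun b hb => hgt b (lt_of_le_of_lt (not_lt.mp ha) (hL.1 b hb))
      rw [hrest, List.append_nil]
      exact (hpre a).trans (List.prefix_append _ _)

lemma flatten_replicate_prefix {α : Type*} (A : List α) {n n' : ℕ} (h : n ≤ n') :
    (List.replicate n A).flatten <+: (List.replicate n' A).flatten := by
  rw [← Nat.add_sub_cancel' h, List.replicate_add, List.flatten_append]
  exact List.prefix_append _ _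

variable {k l : ℕ} (D : Fin k → Fin l → ℕ)

lemma countP_atomList (j : Fin l) (x : Fin k) :
    (atomList D j).countP ((x : ℕ) + 1 < ·) = ∑ y ∈ Ioi x, D y j := by
  rw [atomList, List.countP_flatMap, ← Fin.sum_univ_def, ← Finset.filter_lt_eq_Ioi, Finset.sum_filter]
  refine Finset.sum_congr rfl fun y _ => ?_
  simp [List.countP_replicate]

lemma crossCount_atomList (i j : Fin l) :
    crossCount (atomList D i) (atomList D j) = Ment D i j := by
  rw [atomList, crossCount_flatMap_left, ← Fin.sum_univ_def, Ment]
  refine Finset.sum_congr rfl fun x _ => ?_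
  rw [crossCount_replicate_left, countP_atomList]

def copiesBlock (c : Fin l → ℕ) : List ℕ :=
  (List.finRange l).flatMap fun j => (List.replicate (c j) (atomList D j)).flatten

lemma blockList_succ (m : ℕ) : blockList D (m + 1) = copiesBlock D fun _ => 2 ^ m := rfl

lemma length_copiesBlock (c : Fin l → ℕ) :
    (copiesBlock D c).length = ∑ j, c j * (atomList D j).length := by
  simp [copiesBlock, Fin.sum_univ_def]

lemma crossCount_copiesBlock_left (c : Fin l → ℕ) (B : List ℕ) :
    crossCount (copiesBlock D c) B = ∑ j, c j * crossCount (atomList D j) B := by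
  simp [copiesBlock, crossCount_flatMap_left, crossCount_flatten_replicate_left, Fin.sum_univ_def]

lemma crossCount_copiesBlock_right (A : List ℕ) (c : Fin l → ℕ) :
    crossCount A (copiesBlock D c) = ∑ j, c j * crossCount A (atomList D j) := by
  simp [copiesBlock, crossCount_flatMap_right, crossCount_flatten_replicate_right, Fin.sum_univ_def]

lemma copiesBlock_prefix {c c' : Fin l → ℕ} (t : Fin l) (hlt : ∀ j < t, c j = c' j)
    (hle : ∀ j, c j ≤ c' j) (hgt : ∀ j, t < j → c j = 0) :
    copiesBlock D c <+: copiesBlock D c' :=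
  flatMap_prefix_flatMap (List.pairwise_lt_finRange l) t (fun j hj => by rw [hlt j hj])
    (fun j => flatten_replicate_prefix _ (hle j)) (fun j hj => by simp [hgt j hj])

def partialCopies (m : ℕ) (t : Fin l) (s : ℕ) (j : Fin l) : ℕ :=
  if j < t then 2 ^ m else if j = t then s else 0

lemma sum_partialCopies_mul (m : ℕ) (t : Fin l) (s : ℕ) (x : Fin l → ℕ) :
    ∑ j, partialCopies m t s j * x j = 2 ^ m * ∑ j ∈ Iio t, x j + s * x t := by
  simp [partialCopies, ite_mul, Finset.sum_ite, Finset.mul_sum, Finset.filter_gt_eq_Iio]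

lemma prefixList_succ (n : ℕ) :
    prefixList D (n + 1) = prefixList D n ++ blockList D (n + 1) := by
  simp [prefixList, List.range_succ]

lemma two_pow_sub_one_mul_add (n x : ℕ) : (2 ^ n - 1) * x + 2 ^ n * x = (2 ^ (n + 1) - 1) * x := by
  have : 1 ≤ 2 ^ n := Nat.one_le_two_pow
  rw [← Nat.add_mul, pow_succ]
  congr 1
  omega

lemma length_prefixList (n : ℕ) :
    (prefixList D n).length = (2 ^ n - 1) * ∑ j, (atomList D j).length := by
  induction n with
  | zero => simp [prefixList]
  | succ n ih =>
    rw [prefixList_succ, List.length_append, ih, blockList_succ, length_copiesBlock,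
      ← Finset.mul_sum, two_pow_sub_one_mul_add]

lemma crossCount_prefixList_left (n : ℕ) (B : List ℕ) :
    crossCount (prefixList D n) B = (2 ^ n - 1) * ∑ j, crossCount (atomList D j) B := by
  induction n with
  | zero => simp [prefixList]
  | succ n ih =>
    rw [prefixList_succ, crossCount_append_left, ih, blockList_succ, crossCount_copiesBlock_left,
      ← Finset.mul_sum, two_pow_sub_one_mul_add]

lemma prefixList_prefix_of_le {a b : ℕ} (h : a ≤ b) : prefixList D a <+: prefixList D b := by
  induction b, h using Nat.le_induction with
  | base => exact List.prefix_refl _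
  | succ n _ ih => exact ih.trans (prefixList_succ D n ▸ List.prefix_append _ _)

lemma getD_eq_of_prefix {α : Type*} {A B : List α} (h : A <+: B) {n : ℕ} (hn : n < A.length)
    (d : α) : A.getD n d = B.getD n d := by
  obtain ⟨R, rfl⟩ := h
  exact (List.getD_append _ _ _ _ hn).symm

lemma seqC_eq_getD {n r : ℕ} (h1 : 1 ≤ r) (h2 : r ≤ (prefixList D n).length) :
    seqC D r = (prefixList D n).getD (r - 1) 0 := by
  rcases le_total r n with h | h
  · -- A nonempty prefix forces some atom to be nonempty, and then `B_1 ⋯ B_r` has at least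
    -- `2^r - 1 ≥ r` entries.
    have hS : 0 < ∑ j, (atomList D j).length := by
      refine Nat.pos_of_ne_zero fun h0 => ?_
      rw [length_prefixList, h0, mul_zero] at h2
      omega
    have hr : r ≤ (prefixList D r).length := by
      rw [length_prefixList]
      exact (Nat.le_sub_one_of_lt r.lt_two_pow_self).trans (Nat.le_mul_of_pos_right _ hS)
    exact getD_eq_of_prefix (prefixList_prefix_of_le D h) (by omega) 0
  · exact (getD_eq_of_prefix (prefixList_prefix_of_le D h) (by omega) 0).symm

lemma edgesBetween_eq_crossCount {P Q : List ℕ} {n : ℕ} (h : P ++ Q <+: prefixList D n) :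
    edgesBetween D 0 P.length P.length (P.length + Q.length) = crossCount P Q := by
  have hseq : ∀ r, 1 ≤ r → r ≤ P.length + Q.length → seqC D r = (P ++ Q).getD (r - 1) 0 :=
    fun r h1 h2 => by
      have hlen := h.length_le
      rw [List.length_append] at hlen
      rw [seqC_eq_getD D (n := n) h1 (by omega), getD_eq_of_prefix h (by simp; omega)]
  have hP : ∀ a < P.length, seqC D (a + 1) = P.getD a 0 := fun a ha => by
    rw [hseq _ (by omega) (by omega), Nat.add_sub_cancel, List.getD_append _ _ _ _ ha]
  have hQ : ∀ b < Q.length, seqC D (P.length + 1 + b) = Q.getD b 0 := fun b hb => by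
    rw [hseq _ (by omega) (by omega), List.getD_append_right _ _ _ _ (by omega)]
    congr 1
    omega
  rw [crossCount_eq_card, ← Set.ncard_coe_finset,
    ← Set.ncard_image_of_injective _ (f := fun p : ℕ × ℕ => (p.1 + 1, P.length + 1 + p.2))
      (fun p q hpq => by simp only [Prod.mk.injEq] at hpq; ext <;> omega),
    edgesBetween]
  congr 1
  ext ⟨i, j⟩
  simp only [Set.mem_ofPred_eq, Set.mem_image, Finset.coe_filter, Finset.mem_product,
    Finset.mem_range, Prod.exists, Prod.mk.injEq]
  constructor
  · rintro ⟨-, hi0, hiP, hPj, hjQ, hlt⟩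
    refine ⟨i - 1, j - P.length - 1, ⟨⟨by omega, by omega⟩, ?_⟩, by omega, by omega⟩
    rwa [← hP _ (by omega), ← hQ _ (by omega), Nat.sub_add_cancel hi0,
      show P.length + 1 + (j - P.length - 1) = j by omega]
  · rintro ⟨a, b, ⟨⟨ha, hb⟩, hlt⟩, rfl, rfl⟩
    refine ⟨by omega, by omega, by omega, by omega, by omega, ?_⟩
    rwa [hP a ha, hQ b hb]

end EdgeCount

open EdgeCount

theorem edges_blocks_to_partial_block_general (k l : ℕ)
    (D : Fin k → Fin l → ℕ) (m : ℕ) (t : Fin l) (s : ℕ) (hs : s ≤ 2 ^ m) :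
    edgesBetween D 0 (prefixList D m).length
        (prefixList D m).length ((prefixList D m).length + partialLen D m t s) =
      (2 ^ m - 1) * 2 ^ m * (∑ i : Fin l, ∑ j ∈ Finset.Iio t, Ment D i j) +
        (2 ^ m - 1) * s * (∑ i : Fin l, Ment D i t) := by
  have hlen : (copiesBlock D (partialCopies m t s)).length = partialLen D m t s := by
    rw [length_copiesBlock, sum_partialCopies_mul, partialLen]
  have hpre : prefixList D m ++ copiesBlock D (partialCopies m t s) <+: prefixList D (m + 1) := by
    rw [prefixList_succ, blockList_succ, List.prefix_append_right_inj]
    refine copiesBlock_prefix D t (fun j hj => if_pos hj) (fun j => ?_) (fun j hj => ?_)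
    · unfold partialCopies; split_ifs <;> omega
    · simp [partialCopies, hj.not_gt, hj.ne']
  rw [← hlen, edgesBetween_eq_crossCount D hpre, crossCount_prefixList_left]
  simp only [crossCount_copiesBlock_right, crossCount_atomList, sum_partialCopies_mul,
    Finset.sum_add_distrib, ← Finset.mul_sum]
  ring

/-- Lemma 3.4: the number of edges of `C` with one position in `B_1 B_2 ⋯ B_m` and the
other position in the partial block of `B_{m+1}` (its first `2^m` copies of each of
`D_1, …, D_{t-1}` followed by its first `s` copies of `D_t`) equals
`(2^m - 1) 2^m Σ_{i=1}^{l} Σ_{j=1}^{t-1} m_{i,j} + (2^m - 1) s Σ_{i=1}^{l} m_{i,t}`. -/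
theorem edges_blocks_to_partial_block (k l : ℕ) (hk : 2 ≤ k) (hl : 1 ≤ l)
    (D : Fin k → Fin l → ℕ) (m : ℕ) (hm : 1 ≤ m) (t : Fin l) (s : ℕ) (hs : s ≤ 2 ^ m) :
    edgesBetween D 0 (prefixList D m).length
        (prefixList D m).length ((prefixList D m).length + partialLen D m t s) =
      (2 ^ m - 1) * 2 ^ m * (∑ i : Fin l, ∑ j ∈ Finset.Iio t, Ment D i j) +
        (2 ^ m - 1) * s * (∑ i : Fin l, Ment D i t) :=
  edges_blocks_to_partial_block_general k l D m t s hs
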